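/- Every codeword of the golden code X = (1/√5)·[[α(a+bθ), α(c+dθ)], [iσ(α)(c+dσ(θ)), σ(α)(a+bσ(θ))]], with a,b,c,d ∈ ℤ[i] not all zero, satisfies |det(X)|² ≥ 1/5, and this minimum determinant 1/5 is attained. -/

import Mathlib

/-!
Over `ℚ(i)`, `det X` is `(2 + i) / 5` times the reduced norm `N(a + bθ) - i N(c + dθ)` of the
golden algebra, where `N(x + yθ) = x² + xy - y²`. This reduced norm lies in `ℤ[i]`, so it suffices
that it vanishes only at `0`, i.e. that `i` is not a norm from `ℚ(i, √5)`. After completing the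
square this is the equation `u² - 5v² = i (s² - 5t²)`, which admits no nonzero solution by descent
at the prime `π = 2 + i` above `5`: modulo `π` it reads `u² = 3 s²` in `ZMod 5`, and `3` is not a
square there.
-/

open Complex Matrix

noncomputable def θc : ℂ := (1 + Real.sqrt 5) / 2
noncomputable def θb : ℂ := 1 - θc
noncomputable def αc : ℂ := 1 + Complex.I * θb
noncomputable def σαc : ℂ := 1 + Complex.I * θc
noncomputable abbrev tc : GaussianInt →+* ℂ := GaussianInt.toComplex

/-- Golden codeword associated with a,b,c,d ∈ ℤ[i]. -/
noncomputable def GCword (a b c d : GaussianInt) : Matrix (Fin 2) (Fin 2) ℂ :=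
  (1 / Real.sqrt 5 : ℝ) •
    !![αc * (tc a + tc b * θc), αc * (tc c + tc d * θc);
       Complex.I * σαc * (tc c + tc d * θb), σαc * (tc a + tc b * θb)]

theorem eq_zero_of_forall_pow_dvd {α : Type*} [CommMonoidWithZero α] [IsCancelMulZero α]
    [WfDvdMonoid α] {a b : α} (ha : ¬IsUnit a) (h : ∀ n, a ^ n ∣ b) : b = 0 := by
  by_contra hb
  obtain ⟨n, hn⟩ := FiniteMultiplicity.of_not_isUnit ha hb
  exact hn (h _)

theorem ZMod.eq_zero_of_sq_eq_three_mul_sq {x y : ZMod 5} (h : x ^ 2 = 3 * y ^ 2) :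
    x = 0 ∧ y = 0 := by
  revert x y
  decide

namespace GaussianInt

/-- Reduction modulo `2 + i`, sending `i` to `3`. -/
def toZModFive : GaussianInt →+* ZMod 5 := Zsqrtd.lift ⟨3, by decide⟩

theorem toZModFive_apply (x : GaussianInt) : toZModFive x = x.re + x.im * 3 := by
  simp [toZModFive]

theorem not_isUnit_two_add_I : ¬IsUnit (⟨2, 1⟩ : GaussianInt) := by
  rw [← Zsqrtd.norm_eq_one_iff]
  decide

theorem two_add_I_dvd_of_toZModFive_eq_zero {x : GaussianInt} (h : toZModFive x = 0) :
    (⟨2, 1⟩ : GaussianInt) ∣ x := by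
  rw [toZModFive_apply] at h
  obtain ⟨k, hk⟩ : (5 : ℤ) ∣ x.re + x.im * 3 :=
    (ZMod.intCast_zmod_eq_zero_iff_dvd _ 5).mp (by push_cast; exact h)
  refine ⟨⟨2 * k - x.im, x.im - k⟩, ?_⟩
  ext <;> simp [Zsqrtd.re_mul, Zsqrtd.im_mul] <;> omega

theorem two_add_I_dvd_of_toZModFive_sq_sub_I_mul_sq_eq_zero {x y : GaussianInt}
    (h : toZModFive (x ^ 2 - ⟨0, 1⟩ * y ^ 2) = 0) :
    (⟨2, 1⟩ : GaussianInt) ∣ x ∧ (⟨2, 1⟩ : GaussianInt) ∣ y := by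
  have hI : toZModFive ⟨0, 1⟩ = 3 := by rw [toZModFive_apply]; decide
  rw [map_sub, map_mul, map_pow, map_pow, hI, sub_eq_zero] at h
  obtain ⟨hx, hy⟩ := ZMod.eq_zero_of_sq_eq_three_mul_sq h
  exact ⟨two_add_I_dvd_of_toZModFive_eq_zero hx, two_add_I_dvd_of_toZModFive_eq_zero hy⟩

theorem exists_two_add_I_mul_of_sq_sub_five_mul_sq_eq {u v s t : GaussianInt}
    (h : u ^ 2 - 5 * v ^ 2 = ⟨0, 1⟩ * (s ^ 2 - 5 * t ^ 2)) :
    ∃ u' v' s' t' : GaussianInt, u = ⟨2, 1⟩ * u' ∧ v = ⟨2, 1⟩ * v' ∧ s = ⟨2, 1⟩ * s' ∧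
      t = ⟨2, 1⟩ * t' ∧ u' ^ 2 - 5 * v' ^ 2 = ⟨0, 1⟩ * (s' ^ 2 - 5 * t' ^ 2) := by
  have h5 : (5 : GaussianInt) = ⟨2, 1⟩ * ⟨2, -1⟩ := by ext <;> decide
  have hπ0 : (⟨2, 1⟩ : GaussianInt) ≠ 0 := by decide
  obtain ⟨⟨u', rfl⟩, ⟨s', rfl⟩⟩ := two_add_I_dvd_of_toZModFive_sq_sub_I_mul_sq_eq_zero <| by
    rw [show u ^ 2 - ⟨0, 1⟩ * s ^ 2 = 5 * (v ^ 2 - ⟨0, 1⟩ * t ^ 2) by linear_combination h,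
      map_mul, map_ofNat, show (5 : ZMod 5) = 0 from rfl, zero_mul]
  have hπvt : ⟨2, 1⟩ * (u' ^ 2 - ⟨0, 1⟩ * s' ^ 2) =
      (⟨2, -1⟩ : GaussianInt) * (v ^ 2 - ⟨0, 1⟩ * t ^ 2) := by
    apply mul_left_cancel₀ hπ0
    rw [h5] at h
    linear_combination h
  obtain ⟨⟨v', rfl⟩, ⟨t', rfl⟩⟩ := two_add_I_dvd_of_toZModFive_sq_sub_I_mul_sq_eq_zero <| by
    have hπ : toZModFive ⟨2, 1⟩ = 0 := by rw [toZModFive_apply]; decide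
    have hπ' : toZModFive ⟨2, -1⟩ = -1 := by rw [toZModFive_apply]; decide
    have := congrArg toZModFive hπvt
    rwa [map_mul, map_mul, hπ, hπ', zero_mul, eq_comm, neg_one_mul, neg_eq_zero] at this
  refine ⟨u', v', s', t', rfl, rfl, rfl, rfl, ?_⟩
  apply mul_left_cancel₀ (pow_ne_zero 2 hπ0)
  linear_combination h

theorem two_add_I_pow_dvd_of_sq_sub_five_mul_sq_eq (n : ℕ) {u v s t : GaussianInt}
    (h : u ^ 2 - 5 * v ^ 2 = ⟨0, 1⟩ * (s ^ 2 - 5 * t ^ 2)) :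
    (⟨2, 1⟩ : GaussianInt) ^ n ∣ u ∧ (⟨2, 1⟩ : GaussianInt) ^ n ∣ v ∧
      (⟨2, 1⟩ : GaussianInt) ^ n ∣ s ∧ (⟨2, 1⟩ : GaussianInt) ^ n ∣ t := by
  induction n generalizing u v s t with
  | zero => simp
  | succ n ih =>
    obtain ⟨u', v', s', t', rfl, rfl, rfl, rfl, h'⟩ :=
      exists_two_add_I_mul_of_sq_sub_five_mul_sq_eq h
    obtain ⟨hu, hv, hs, ht⟩ := ih h'
    simp only [pow_succ']
    exact ⟨mul_dvd_mul_left _ hu, mul_dvd_mul_left _ hv, mul_dvd_mul_left _ hs,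
      mul_dvd_mul_left _ ht⟩

theorem eq_zero_of_sq_sub_five_mul_sq_eq {u v s t : GaussianInt}
    (h : u ^ 2 - 5 * v ^ 2 = ⟨0, 1⟩ * (s ^ 2 - 5 * t ^ 2)) :
    u = 0 ∧ v = 0 ∧ s = 0 ∧ t = 0 := by
  have hdvd n := two_add_I_pow_dvd_of_sq_sub_five_mul_sq_eq n h
  exact ⟨eq_zero_of_forall_pow_dvd not_isUnit_two_add_I fun n => (hdvd n).1,
    eq_zero_of_forall_pow_dvd not_isUnit_two_add_I fun n => (hdvd n).2.1,
    eq_zero_of_forall_pow_dvd not_isUnit_two_add_I fun n => (hdvd n).2.2.1,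
    eq_zero_of_forall_pow_dvd not_isUnit_two_add_I fun n => (hdvd n).2.2.2⟩

end GaussianInt

/-- `goldenNorm x y = (x + yθ)(x + yσ(θ))`, the norm of `x + yθ` down to `ℤ[i]`. -/
def goldenNorm (x y : GaussianInt) : GaussianInt := x ^ 2 + x * y - y ^ 2

/-- The reduced norm `N(x₀) - i N(x₁)` of `x₀ + x₁ e` in the golden algebra, with
`x₀ = a + bθ` and `x₁ = c + dθ`. -/
def reducedNorm (a b c d : GaussianInt) : GaussianInt := goldenNorm a b - ⟨0, 1⟩ * goldenNorm c d

theorem eq_zero_of_reducedNorm_eq_zero {a b c d : GaussianInt} (h : reducedNorm a b c d = 0) :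
    a = 0 ∧ b = 0 ∧ c = 0 ∧ d = 0 := by
  obtain ⟨ha, rfl, hc, rfl⟩ := GaussianInt.eq_zero_of_sq_sub_five_mul_sq_eq
    (u := 2 * a + b) (v := b) (s := 2 * c + d) (t := d) <| by
      unfold reducedNorm goldenNorm at h
      linear_combination 4 * h
  simp_all

theorem sqrt_five_sq : ((Real.sqrt 5 : ℝ) : ℂ) ^ 2 = 5 := by
  norm_cast
  exact Real.sq_sqrt (by norm_num)

theorem θc_mul_θb : θc * θb = -1 := by
  unfold θb θc
  linear_combination (-1 / 4 : ℂ) * sqrt_five_sq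

theorem θc_add_θb : θc + θb = 1 := by
  unfold θb
  ring

theorem αc_mul_σαc : αc * σαc = 2 + Complex.I := by
  unfold αc σαc
  linear_combination Complex.I * θc_add_θb + Complex.I ^ 2 * θc_mul_θb - Complex.I_sq

theorem tc_goldenNorm (x y : GaussianInt) :
    tc (goldenNorm x y) = (tc x + tc y * θc) * (tc x + tc y * θb) := by
  simp only [goldenNorm, map_sub, map_add, map_mul, map_pow]
  linear_combination -(tc x * tc y) * θc_add_θb - tc y ^ 2 * θc_mul_θb

theorem det_GCword (a b c d : GaussianInt) :
    (GCword a b c d).det = (2 + Complex.I) / 5 * tc (reducedNorm a b c d) := by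
  have hI : tc ⟨0, 1⟩ = Complex.I := by simp [GaussianInt.toComplex_def']
  have hscale : (((1 / Real.sqrt 5 : ℝ) : ℂ)) ^ 2 = 1 / 5 := by
    rw [Complex.ofReal_div, div_pow, sqrt_five_sq]
    norm_num
  rw [GCword, ← Complex.coe_smul, det_smul, det_fin_two_of, Fintype.card_fin, hscale]
  simp only [reducedNorm, map_sub, map_mul, tc_goldenNorm, hI]
  linear_combination (1 / 5 : ℂ) * ((tc a + tc b * θc) * (tc a + tc b * θb) -
    Complex.I * ((tc c + tc d * θc) * (tc c + tc d * θb))) * αc_mul_σαc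

theorem normSq_det_GCword (a b c d : GaussianInt) :
    Complex.normSq (GCword a b c d).det = ((reducedNorm a b c d).norm : ℝ) / 5 := by
  rw [det_GCword, map_mul, map_div₀, GaussianInt.intCast_real_norm]
  norm_num [Complex.normSq_apply]
  ring

/-- Every nonzero golden codeword has |det X|² ≥ 1/5, and 1/5 is attained. -/
theorem stmt12 :
    (∀ a b c d : GaussianInt, ¬(a = 0 ∧ b = 0 ∧ c = 0 ∧ d = 0) →
      (1 : ℝ) / 5 ≤ Complex.normSq (GCword a b c d).det) ∧
    (∃ a b c d : GaussianInt, ¬(a = 0 ∧ b = 0 ∧ c = 0 ∧ d = 0) ∧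
      Complex.normSq (GCword a b c d).det = 1 / 5) := by
  refine ⟨fun a b c d h => ?_, 1, 0, 0, 0, by simp, ?_⟩
  · have hnorm : 1 ≤ (reducedNorm a b c d).norm :=
      GaussianInt.norm_pos.2 (mt eq_zero_of_reducedNorm_eq_zero h)
    rw [normSq_det_GCword]
    gcongr
    exact_mod_cast hnorm
  · rw [normSq_det_GCword]
    norm_num [reducedNorm, goldenNorm]
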